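/- arXiv:1208.1728 — 6 statements merged into one kernel-verified Lean document; each statement's English description precedes it below -/
import Mathlib

section
/- For every real number d with -1 < d < 1/2 and d ≠ 0, the sequence of squared fractional differencing coefficients is summable: ∑_{j=0}^∞ η_j² < ∞, where η_j = Γ(j + d) / (Γ(j + 1) Γ(d)). -/
open Real Nat

private lemma gamma_add_nat_eq (d : ℝ) (hd : ∀ j : ℕ, d + (j : ℝ) ≠ 0) (n : ℕ) :
    Real.Gamma (d + n) = Real.Gamma d * ∏ j ∈ Finset.range n, (d + (j : ℝ)) := by
  induction n with
  | zero => simp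
  | succ n ih =>
    have h : d + ((n + 1 : ℕ) : ℝ) = (d + n) + 1 := by push_cast; ring
    rw [h, Real.Gamma_add_one (hd n), ih, Finset.prod_range_succ]
    ring

/-- For `-1 < d < 1/2`, `d ≠ 0`, the squared fractional differencing
coefficients `η_j = Γ(j+d)/(Γ(j+1)Γ(d))` are summable. -/
theorem eta_sq_summable (d : ℝ) (hd1 : -1 < d) (hd2 : d < 1/2) (hd0 : d ≠ 0) :
    Summable (fun j : ℕ =>
      (Real.Gamma ((j : ℝ) + d) / (Real.Gamma ((j : ℝ) + 1) * Real.Gamma d)) ^ 2) := by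
  have hΓd : Real.Gamma d ≠ 0 := by
    apply Real.Gamma_ne_zero
    intro m
    cases m with
    | zero => simpa using hd0
    | succ k =>
      intro h
      have : (0 : ℝ) ≤ k := Nat.cast_nonneg k
      push_cast at h
      nlinarith
  have hden : ∀ j : ℕ, d + (j : ℝ) ≠ 0 := by
    intro j
    cases j with
    | zero => simpa using hd0
    | succ k =>
      have : (0 : ℝ) ≤ k := Nat.cast_nonneg k
      push_cast
      nlinarith
  have hsumg : Summable (fun n : ℕ => (n : ℝ) ^ (2 * d - 2)) :=
    Real.summable_nat_rpow.mpr (by linarith)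
  refine summable_of_isBigO_nat hsumg ?_
  rw [Asymptotics.isBigO_iff]
  refine ⟨16 / Real.Gamma d ^ 2, ?_⟩
  have habs : |Real.Gamma d| / 2 < |Real.Gamma d| := by
    have := abs_pos.mpr hΓd; linarith
  filter_upwards [((Real.GammaSeq_tendsto_Gamma d).abs.eventually_const_lt habs),
    Filter.eventually_ge_atTop 2] with n hG hn2
  -- basic positivity facts
  have hn0 : (0 : ℝ) < n := by exact_mod_cast Nat.lt_of_lt_of_le (by norm_num) hn2
  have hnd : (0 : ℝ) < d + n := by
    have : (2 : ℝ) ≤ n := by exact_mod_cast hn2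
    linarith
  have hfact : (0 : ℝ) < (n ! : ℝ) := by exact_mod_cast Nat.factorial_pos n
  have hnpow : (0 : ℝ) < (n : ℝ) ^ d := Real.rpow_pos_of_pos hn0 d
  set P := ∏ j ∈ Finset.range n, (d + (j : ℝ)) with hP
  have hQ : ∏ j ∈ Finset.range (n + 1), (d + (j : ℝ)) = P * (d + n) :=
    Finset.prod_range_succ _ n
  have hPne : P ≠ 0 := Finset.prod_ne_zero_iff.mpr fun j _ => hden j
  -- η_n = P / n!
  have heta : Real.Gamma ((n : ℝ) + d) / (Real.Gamma ((n : ℝ) + 1) * Real.Gamma d)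
      = P / (n ! : ℝ) := by
    rw [add_comm (n : ℝ) d, gamma_add_nat_eq d hden n, Real.Gamma_nat_eq_factorial]
    field_simp
    ring
  -- GammaSeq identity
  have hGS : Real.GammaSeq d n = (n : ℝ) ^ d * (n ! : ℝ) / (P * (d + n)) := by
    rw [Real.GammaSeq, hQ]
  have hGabs : |Real.GammaSeq d n| = (n : ℝ) ^ d * (n ! : ℝ) / (|P| * (d + n)) := by
    rw [hGS, abs_div, abs_mul, abs_mul, abs_of_pos hnpow, abs_of_pos hfact,
      abs_of_pos hnd]
  have hGpos : 0 < |Real.Gamma d| / 2 := by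
    have := abs_pos.mpr hΓd; linarith
  have hPabs_pos : 0 < |P| := abs_pos.mpr hPne
  -- bound |P| ≤ 2 n^d n! / (|Γ d| (d+n))
  have hbound : |P| ≤ 2 * ((n : ℝ) ^ d * (n ! : ℝ)) / (|Real.Gamma d| * (d + n)) := by
    have h1 : |Real.Gamma d| / 2 ≤ (n : ℝ) ^ d * (n ! : ℝ) / (|P| * (d + n)) := by
      rw [← hGabs]; exact le_of_lt hG
    rw [div_le_div_iff₀ (by positivity) (by positivity)] at h1
    rw [le_div_iff₀ (by positivity)]
    nlinarith
  -- d + n ≥ n/2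
  have hdn : (n : ℝ) / 2 ≤ d + n := by
    have : (2 : ℝ) ≤ n := by exact_mod_cast hn2
    linarith
  have habs_eta : |P / (n ! : ℝ)| ≤ 4 / |Real.Gamma d| * (n : ℝ) ^ (d - 1) := by
    rw [abs_div, abs_of_pos hfact, div_le_iff₀ hfact]
    have h2 : 2 * ((n : ℝ) ^ d * (n ! : ℝ)) / (|Real.Gamma d| * (d + n))
        ≤ 2 * ((n : ℝ) ^ d * (n ! : ℝ)) / (|Real.Gamma d| * ((n : ℝ) / 2)) := by
      apply div_le_div_of_nonneg_left (by positivity) (by positivity)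
      exact mul_le_mul_of_nonneg_left hdn (abs_nonneg _)
    have h3 : 2 * ((n : ℝ) ^ d * (n ! : ℝ)) / (|Real.Gamma d| * ((n : ℝ) / 2))
        = 4 / |Real.Gamma d| * (n : ℝ) ^ (d - 1) * (n ! : ℝ) := by
      rw [Real.rpow_sub hn0, Real.rpow_one]
      field_simp
      ring
    calc |P| ≤ _ := hbound
      _ ≤ _ := h2
      _ = _ := h3
  -- conclude
  have hrw : (n : ℝ) ^ (2 * d - 2) = ((n : ℝ) ^ (d - 1)) ^ 2 := by
    rw [← Real.rpow_natCast ((n : ℝ) ^ (d - 1)) 2, ← Real.rpow_mul (le_of_lt hn0)]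
    norm_num
    ring_nf
  rw [heta, Real.norm_eq_abs, Real.norm_eq_abs, hrw, abs_of_nonneg (sq_nonneg _),
    abs_of_nonneg (sq_nonneg ((n : ℝ) ^ (d - 1)))]
  calc (P / (n ! : ℝ)) ^ 2
      ≤ (4 / |Real.Gamma d| * (n : ℝ) ^ (d - 1)) ^ 2 := by
        rw [← sq_abs]
        exact pow_le_pow_left₀ (abs_nonneg _) habs_eta 2
    _ = 16 / Real.Gamma d ^ 2 * ((n : ℝ) ^ (d - 1)) ^ 2 := by
        rw [mul_pow, div_pow, sq_abs]; norm_num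
end

section
/- For every real number d with -1 < d < 0, the fractional differencing coefficients are absolutely summable: ∑_{j=0}^∞ |η_j| < ∞, where η_j = Γ(j + d) / (Γ(j + 1) Γ(d)). -/
open Real

/-- For `-1 < d < 0`, the fractional differencing coefficients
`η_j = Γ(j+d)/(Γ(j+1)Γ(d))` are absolutely summable. -/
theorem eta_abs_summable (d : ℝ) (hd1 : -1 < d) (hd2 : d < 0) :
    Summable (fun j : ℕ =>
      |Real.Gamma ((j : ℝ) + d) / (Real.Gamma ((j : ℝ) + 1) * Real.Gamma d)|) := by
  have hd0 : d ≠ 0 := ne_of_lt hd2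
  have hΓd1 : 0 < Real.Gamma (d + 1) := Real.Gamma_pos_of_pos (by linarith)
  have hrec : Real.Gamma (d + 1) = d * Real.Gamma d := Real.Gamma_add_one hd0
  have hΓd : Real.Gamma d < 0 := by nlinarith
  have hdΓd : 0 < d * Real.Gamma d := by nlinarith
  set f : ℕ → ℝ := fun j =>
    |Real.Gamma ((j : ℝ) + d) / (Real.Gamma ((j : ℝ) + 1) * Real.Gamma d)| with hf
  set H : ℕ → ℝ := fun j =>
    Real.Gamma ((j : ℝ) + d) / Real.Gamma (j : ℝ) / (d * Real.Gamma d) with hHdef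
  have hHpos : ∀ n : ℕ, 1 ≤ n → 0 ≤ H n := by
    intro n hn
    have h1 : (1 : ℝ) ≤ (n : ℝ) := by exact_mod_cast hn
    have h2 : 0 < Real.Gamma ((n : ℝ) + d) := Real.Gamma_pos_of_pos (by linarith)
    have h3 : 0 < Real.Gamma (n : ℝ) := Real.Gamma_pos_of_pos (by linarith)
    exact div_nonneg (div_nonneg h2.le h3.le) hdΓd.le
  have hf0 : f 0 = 1 := by
    simp only [hf, Nat.cast_zero, zero_add, Real.Gamma_one, one_mul]
    rw [div_self hΓd.ne, abs_one]
  have hH1 : H 1 = 1 := by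
    simp only [hHdef, Nat.cast_one, Real.Gamma_one, div_one, add_comm (1:ℝ) d]
    rw [hrec, div_self hdΓd.ne']
  have hstep : ∀ n : ℕ, 1 ≤ n → f n = H n - H (n + 1) := by
    intro n hn
    have h1 : (1 : ℝ) ≤ (n : ℝ) := by exact_mod_cast hn
    have hx0 : (n : ℝ) ≠ 0 := by linarith
    have hxd : 0 < (n : ℝ) + d := by linarith
    have hG1 : Real.Gamma ((n : ℝ) + 1) = (n : ℝ) * Real.Gamma (n : ℝ) :=
      Real.Gamma_add_one hx0
    have hG2 : Real.Gamma ((n : ℝ) + d + 1) = ((n : ℝ) + d) * Real.Gamma ((n : ℝ) + d) :=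
      Real.Gamma_add_one (ne_of_gt hxd)
    have hGn : 0 < Real.Gamma (n : ℝ) := Real.Gamma_pos_of_pos (by linarith)
    have hGnd : 0 < Real.Gamma ((n : ℝ) + d) := Real.Gamma_pos_of_pos hxd
    have hGn1 : 0 < Real.Gamma ((n : ℝ) + 1) := Real.Gamma_pos_of_pos (by linarith)
    have habs : f n = -(Real.Gamma ((n : ℝ) + d) / (Real.Gamma ((n : ℝ) + 1) * Real.Gamma d)) := by
      simp only [hf]
      rw [abs_of_nonpos]
      exact div_nonpos_of_nonneg_of_nonpos hGnd.le (by nlinarith)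
    rw [habs]
    simp only [hHdef, Nat.cast_add, Nat.cast_one]
    have hrw : Real.Gamma ((n : ℝ) + 1 + d) = ((n : ℝ) + d) * Real.Gamma ((n : ℝ) + d) := by
      rw [show (n : ℝ) + 1 + d = (n : ℝ) + d + 1 by ring, hG2]
    rw [hrw, hG1]
    field_simp [hx0, hGn.ne', hΓd.ne, hd0]
    ring
  have hsumeq : ∀ m : ℕ, 1 ≤ m → ∑ j ∈ Finset.range m, f j = 2 - H m := by
    intro m hm
    induction m with
    | zero => omega
    | succ k ih =>
      rcases Nat.eq_zero_or_pos k with hk | hk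
      · subst hk
        simp [hf0, hH1]
        norm_num
      · rw [Finset.sum_range_succ, ih hk, hstep k hk]
        ring
  apply summable_of_sum_range_le (c := 2) (fun n => abs_nonneg _)
  intro n
  rcases Nat.eq_zero_or_pos n with h | h
  · simp [h]
  · calc ∑ j ∈ Finset.range n, f j = 2 - H n := hsumeq n h
    _ ≤ 2 := by have := hHpos n h; linarith
end

section
/- For every real number d with -1 < d < 1/2 and d ≠ 0, and every natural number h, the autocovariance integral of fractional noise evaluates in closed form: (1/(2π)) ∫_{-π}^{π} (2 - 2 cos λ)^(-d) cos(h λ) dλ = Γ(1 - 2d) Γ(h + d) / ( Γ(1 - d) Γ(d) Γ(1 + h - d) ). Consequently, for innovation variance σ² > 0, the ARFIMA(0,d,0) autocovariance is γ₀(h) = σ² Γ(1-2d) Γ(h+d) / (Γ(1-d) Γ(d) Γ(1+h-d)), and the autocorrelation is ρ₀(h) = Γ(1-d) Γ(h+d) / (Γ(d) Γ(1+h-d)). -/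
/-! Write `F_e(k) = ∫₀^π (2 - 2 cos x)^(-e) cos (k x) dx`, so that the integral over `[-π, π]` is
`2 F_e(k)` by evenness. The substitution `s = (1 - cos x) / 2` turns `F_e(0)` into
`4^(-e) B(1/2 - e, 1/2)`, which Legendre's duplication formula evaluates to
`π Γ(1 - 2e) / Γ(1 - e)²`. Multiplying the integrand by `2 - 2 cos x` gives
`F_{e-1}(k) = 2 F_e(k) - F_e(k+1) - F_e(k-1)`, and integrating the derivative of
`(2 - 2 cos x)^(1-e) sin (n x)` over `[0, π]` gives `n F_{e-1}(n) = (1 - e) (F_e(n+1) - F_e(n-1))`.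
Together they yield the first-order recurrence `(n + 1 - e) F_e(n+1) = (n + e) F_e(n)` (at `n = 0`
through the explicit value of `F_{e-1}(0)`), which telescopes into the ratio of Gamma values. -/

open Real intervalIntegral

open MeasureTheory Set

namespace FractionalNoise

theorem two_sub_two_cos_nonneg (x : ℝ) : 0 ≤ 2 - 2 * cos x := by
  linarith [cos_le_one x]

theorem sq_mul_le_two_sub_two_cos {x : ℝ} (hx0 : 0 ≤ x) (hxπ : x ≤ π) :
    (2 / π * x) ^ 2 ≤ 2 - 2 * cos x := by
  have hjordan : 2 / π * (x / 2) ≤ sin (x / 2) := mul_le_sin (by linarith) (by linarith)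
  have hhalf : 2 - 2 * cos x = 4 * sin (x / 2) ^ 2 := by
    have := cos_sq (x / 2)
    rw [show 2 * (x / 2) = x by ring] at this
    nlinarith [sin_sq_add_cos_sq (x / 2)]
  have hnonneg : 0 ≤ 2 / π * (x / 2) := by positivity
  nlinarith

theorem two_sub_two_cos_pos {x : ℝ} (hx0 : 0 < x) (hxπ : x ≤ π) : 0 < 2 - 2 * cos x :=
  (by positivity : (0 : ℝ) < (2 / π * x) ^ 2).trans_le (sq_mul_le_two_sub_two_cos hx0.le hxπ)

theorem two_sub_two_cos_rpow_le {e x : ℝ} (he : 0 ≤ e) (hx0 : 0 < x) (hxπ : x ≤ π) :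
    (2 - 2 * cos x) ^ (-e) ≤ (2 / π) ^ (-(2 * e)) * x ^ (-(2 * e)) := calc
  (2 - 2 * cos x) ^ (-e) ≤ ((2 / π * x) ^ 2) ^ (-e) :=
    rpow_le_rpow_of_nonpos (by positivity) (sq_mul_le_two_sub_two_cos hx0.le hxπ) (by linarith)
  _ = (2 / π) ^ (-(2 * e)) * x ^ (-(2 * e)) := by
    rw [← rpow_natCast, ← rpow_mul (by positivity), mul_rpow (by positivity) hx0.le]
    push_cast
    ring_nf

theorem two_sub_two_cos_rpow_one_sub {e : ℝ} (he : e ≠ 1) (x : ℝ) :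
    (2 - 2 * cos x) ^ (1 - e) = (2 - 2 * cos x) * (2 - 2 * cos x) ^ (-e) := by
  rw [show 1 - e = 1 + -e by ring,
    rpow_add' (two_sub_two_cos_nonneg x) (by contrapose! he; linarith), rpow_one]

theorem continuous_two_sub_two_cos_rpow {p : ℝ} (hp : 0 ≤ p) :
    Continuous fun x => (2 - 2 * cos x) ^ p :=
  (continuous_const.sub (continuous_const.mul continuous_cos)).rpow_const fun _ => .inr hp

theorem intervalIntegrable_two_sub_two_cos_rpow_mul_cos {e : ℝ} (he : e < 1 / 2) (k : ℝ) :
    IntervalIntegrable (fun x => (2 - 2 * cos x) ^ (-e) * cos (k * x)) volume 0 π := by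
  rcases lt_or_ge e 0 with he0 | he0
  · exact ((continuous_two_sub_two_cos_rpow (by linarith)).mul
      (continuous_cos.comp (continuous_const_mul k))).intervalIntegrable _ _
  refine IntervalIntegrable.mono_fun'
    ((intervalIntegral.intervalIntegrable_rpow' (r := -(2 * e)) (by linarith)).const_mul
      ((2 / π) ^ (-(2 * e))))
    (by fun_prop) ?_
  rw [uIoc_of_le pi_pos.le]
  refine (ae_restrict_iff' measurableSet_Ioc).2 (.of_forall fun x hx => ?_)
  dsimp only
  rw [norm_mul, Real.norm_of_nonneg (rpow_nonneg (two_sub_two_cos_nonneg x) _)]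
  calc (2 - 2 * cos x) ^ (-e) * ‖cos (k * x)‖ ≤ (2 - 2 * cos x) ^ (-e) :=
        mul_le_of_le_one_right (rpow_nonneg (two_sub_two_cos_nonneg x) _) (abs_cos_le_one _)
    _ ≤ _ := two_sub_two_cos_rpow_le he0 hx.1 hx.2

theorem integral_Ioo_rpow_mul_one_sub_rpow {a b : ℝ} (ha : 0 < a) (hb : 0 < b) :
    ∫ s in Ioo (0 : ℝ) 1, s ^ (a - 1) * (1 - s) ^ (b - 1) = Gamma a * Gamma b / Gamma (a + b) := by
  have hbeta : Complex.betaIntegral a b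
      = ((∫ s in (0 : ℝ)..1, s ^ (a - 1) * (1 - s) ^ (b - 1) : ℝ) : ℂ) := by
    rw [Complex.betaIntegral, ← intervalIntegral.integral_ofReal]
    refine intervalIntegral.integral_congr fun x hx => ?_
    rw [uIcc_of_le zero_le_one] at hx
    rw [Complex.ofReal_mul, Complex.ofReal_cpow hx.1, Complex.ofReal_cpow (by linarith [hx.2])]
    push_cast
    rfl
  have hGamma := Complex.Gamma_mul_Gamma_eq_betaIntegral (s := a) (t := b)
    (by simpa using ha) (by simpa using hb)
  rw [hbeta, ← Complex.ofReal_add, Complex.Gamma_ofReal, Complex.Gamma_ofReal,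
    Complex.Gamma_ofReal] at hGamma
  norm_cast at hGamma
  rw [intervalIntegral.integral_of_le zero_le_one, integral_Ioc_eq_integral_Ioo] at hGamma
  rw [hGamma, mul_div_cancel_left₀ _ (Gamma_pos_of_pos (add_pos ha hb)).ne']

theorem image_one_sub_cos_div_two_Ioo :
    (fun x => (1 - cos x) / 2) '' Ioo 0 π = Ioo 0 1 := by
  ext s
  constructor
  · rintro ⟨x, hx, rfl⟩
    have h1 : cos x < 1 := by
      simpa using strictAntiOn_cos (left_mem_Icc.2 pi_pos.le) (Ioo_subset_Icc_self hx) hx.1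
    have h2 : -1 < cos x := by
      simpa using strictAntiOn_cos (Ioo_subset_Icc_self hx) (right_mem_Icc.2 pi_pos.le) hx.2
    constructor <;> linarith
  · rintro ⟨hs0, hs1⟩
    refine ⟨arccos (1 - 2 * s), ⟨arccos_pos.2 (by linarith), ?_⟩, ?_⟩
    · exact arccos_lt_pi.2 (by linarith)
    · simp only
      rw [cos_arccos (by linarith) (by linarith)]
      ring

theorem sqrt_mul_one_sub_mul_rpow {e s : ℝ} (hs0 : 0 < s) (hs1 : s < 1) :
    √(s * (1 - s)) * (4 ^ (-e) * (s ^ (1 / 2 - e - 1) * (1 - s) ^ ((1 / 2 : ℝ) - 1)))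
      = (4 * s) ^ (-e) := by
  have hs1' : 0 < 1 - s := by linarith
  have hsqrt : √(s * (1 - s)) * (s ^ (-(1 / 2) : ℝ) * (1 - s) ^ (-(1 / 2) : ℝ)) = 1 := by
    rw [← mul_rpow hs0.le hs1'.le, sqrt_eq_rpow, ← rpow_add (by positivity)]
    norm_num
  rw [show 1 / 2 - e - 1 = -e + -(1 / 2) by ring, show (1 / 2 : ℝ) - 1 = -(1 / 2) by norm_num,
    rpow_add hs0, mul_rpow (by norm_num) hs0.le]
  linear_combination (4 ^ (-e) * s ^ (-e)) * hsqrt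

theorem four_rpow_neg_mul_beta_half {e : ℝ} (he : e < 1 / 2) :
    (4 : ℝ) ^ (-e) * (Gamma (1 / 2 - e) * Gamma (1 / 2) / Gamma (1 - e))
      = π * Gamma (1 - 2 * e) / Gamma (1 - e) ^ 2 := by
  have hdup := Gamma_mul_Gamma_add_half (1 / 2 - e)
  rw [show 1 / 2 - e + 1 / 2 = 1 - e by ring, show 2 * (1 / 2 - e) = 1 - 2 * e by ring,
    show 1 - (1 - 2 * e) = 2 * e by ring] at hdup
  have hpow : (4 : ℝ) ^ (-e) * 2 ^ (2 * e) = 1 := by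
    rw [show (4 : ℝ) = 2 ^ (2 : ℝ) by norm_num, ← rpow_mul (by norm_num),
      ← rpow_add (by norm_num)]
    norm_num
  have hG : Gamma (1 - e) ≠ 0 := (Gamma_pos_of_pos (by linarith)).ne'
  rw [Gamma_one_half_eq]
  generalize Gamma (1 / 2 - e) = a, Gamma (1 - 2 * e) = c at hdup ⊢
  field_simp
  linear_combination 4 ^ (-e) * √π * hdup + c * √π ^ 2 * hpow + c * sq_sqrt pi_pos.le

theorem integral_two_sub_two_cos_rpow {e : ℝ} (he : e < 1 / 2) :
    ∫ x in 0..π, (2 - 2 * cos x) ^ (-e) = π * Gamma (1 - 2 * e) / Gamma (1 - e) ^ 2 := by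
  -- `s = (1 - cos x) / 2` has `2 - 2 cos x = 4 s` and `ds = √(s (1 - s)) dx`
  set φ : ℝ → ℝ := fun x => (1 - cos x) / 2
  have hderiv : ∀ x ∈ Ioo 0 π, HasDerivWithinAt φ (sin x / 2) (Ioo 0 π) x := fun x _ => by
    simpa using (((hasDerivAt_cos x).const_sub 1).div_const 2).hasDerivWithinAt
  have hinj : InjOn φ (Ioo 0 π) := fun x hx y hy hxy =>
    injOn_cos (Ioo_subset_Icc_self hx) (Ioo_subset_Icc_self hy) (by simp only [φ] at hxy; linarith)
  have hsubst := integral_image_eq_integral_abs_deriv_smul measurableSet_Ioo hderiv hinj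
    fun s => (4 : ℝ) ^ (-e) * (s ^ (1 / 2 - e - 1) * (1 - s) ^ ((1 / 2 : ℝ) - 1))
  have hjac : ∀ x ∈ Ioo 0 π, |sin x / 2| •
      ((4 : ℝ) ^ (-e) * (φ x ^ (1 / 2 - e - 1) * (1 - φ x) ^ ((1 / 2 : ℝ) - 1)))
        = (2 - 2 * cos x) ^ (-e) := fun x hx => by
    have hφ : φ x ∈ Ioo 0 1 := image_one_sub_cos_div_two_Ioo ▸ mem_image_of_mem φ hx
    have hsin : |sin x / 2| = √(φ x * (1 - φ x)) := by
      rw [← sqrt_sq_eq_abs]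
      congr 1
      simp only [φ]
      nlinarith [sin_sq_add_cos_sq x]
    rw [smul_eq_mul, hsin, sqrt_mul_one_sub_mul_rpow hφ.1 hφ.2]
    simp only [φ]
    ring_nf
  rw [image_one_sub_cos_div_two_Ioo, MeasureTheory.integral_const_mul,
    integral_Ioo_rpow_mul_one_sub_rpow (by linarith) (by norm_num),
    setIntegral_congr_fun measurableSet_Ioo hjac, ← integral_Ioc_eq_integral_Ioo,
    ← intervalIntegral.integral_of_le pi_pos.le] at hsubst
  rw [← hsubst, show (1 / 2 : ℝ) - e + 1 / 2 = 1 - e by ring, four_rpow_neg_mul_beta_half he]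

theorem hasDerivAt_two_sub_two_cos_rpow_mul_sin {e k x : ℝ} (hx : 2 - 2 * cos x ≠ 0) :
    HasDerivAt (fun y => (2 - 2 * cos y) ^ (1 - e) * sin (k * y))
      ((1 - e) * ((2 - 2 * cos x) ^ (-e) * cos ((k - 1) * x)
          - (2 - 2 * cos x) ^ (-e) * cos ((k + 1) * x))
        + k * ((2 - 2 * cos x) ^ (-(e - 1)) * cos (k * x))) x := by
  have hbase : HasDerivAt (fun y => 2 - 2 * cos y) (2 * sin x) x := by
    simpa using ((hasDerivAt_cos x).const_mul 2).const_sub 2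
  have hsin : HasDerivAt (fun y => sin (k * y)) (cos (k * x) * k) x := by
    simpa using ((hasDerivAt_id x).const_mul k).sin
  refine ((hbase.rpow_const (p := 1 - e) (.inl hx)).mul hsin).congr_deriv ?_
  rw [neg_sub, sub_sub_cancel_left, show (k - 1) * x = k * x - x by ring,
    show (k + 1) * x = k * x + x by ring, cos_sub, cos_add]
  ring

noncomputable def cosCoeff (e k : ℝ) : ℝ :=
  ∫ x in 0..π, (2 - 2 * cos x) ^ (-e) * cos (k * x)

theorem cosCoeff_neg (e k : ℝ) : cosCoeff e (-k) = cosCoeff e k := by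
  simp only [cosCoeff, neg_mul, cos_neg]

theorem cosCoeff_zero {e : ℝ} (he : e < 1 / 2) :
    cosCoeff e 0 = π * Gamma (1 - 2 * e) / Gamma (1 - e) ^ 2 := by
  simpa [cosCoeff] using integral_two_sub_two_cos_rpow he

theorem cosCoeff_sub_one {e : ℝ} (he : e < 1 / 2) (k : ℝ) :
    cosCoeff (e - 1) k = 2 * cosCoeff e k - cosCoeff e (k + 1) - cosCoeff e (k - 1) := by
  have hi := intervalIntegrable_two_sub_two_cos_rpow_mul_cos he
  have hpt : ∀ x, (2 - 2 * cos x) ^ (-(e - 1)) * cos (k * x)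
      = 2 * ((2 - 2 * cos x) ^ (-e) * cos (k * x))
        - (2 - 2 * cos x) ^ (-e) * cos ((k + 1) * x)
        - (2 - 2 * cos x) ^ (-e) * cos ((k - 1) * x) := fun x => by
    rw [neg_sub, two_sub_two_cos_rpow_one_sub (by linarith), show (k + 1) * x = k * x + x by ring,
      show (k - 1) * x = k * x - x by ring, cos_add, cos_sub]
    ring
  simp only [cosCoeff, hpt]
  rw [intervalIntegral.integral_sub (((hi k).const_mul 2).sub (hi _)) (hi _),
    intervalIntegral.integral_sub ((hi k).const_mul 2) (hi _), intervalIntegral.integral_const_mul]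

theorem natCast_mul_cosCoeff_sub_one {e : ℝ} (he : e < 1 / 2) (n : ℕ) :
    n * cosCoeff (e - 1) n = (1 - e) * (cosCoeff e (n + 1) - cosCoeff e (n - 1)) := by
  have hi := intervalIntegrable_two_sub_two_cos_rpow_mul_cos he
  have hi' := intervalIntegrable_two_sub_two_cos_rpow_mul_cos (e := e - 1) (by linarith)
  have hftc := intervalIntegral.integral_eq_sub_of_hasDerivAt_of_le
    (f := fun y => (2 - 2 * cos y) ^ (1 - e) * sin (n * y)) pi_pos.le
    ((continuous_two_sub_two_cos_rpow (by linarith)).mul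
      (continuous_sin.comp (continuous_const_mul _))).continuousOn
    (fun x hx => hasDerivAt_two_sub_two_cos_rpow_mul_sin (e := e) (k := n)
      (two_sub_two_cos_pos hx.1 hx.2.le).ne')
    ((((hi _).sub (hi _)).const_mul (1 - e)).add ((hi' _).const_mul (n : ℝ)))
  rw [intervalIntegral.integral_add (((hi _).sub (hi _)).const_mul _) ((hi' _).const_mul _),
    intervalIntegral.integral_const_mul, intervalIntegral.integral_const_mul,
    intervalIntegral.integral_sub (hi _) (hi _)] at hftc
  simp only [cosCoeff, neg_sub]
  simp [sin_nat_mul_pi] at hftc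
  linear_combination hftc

theorem cosCoeff_three_term {e : ℝ} (he : e < 1 / 2) (n : ℕ) :
    (n + 1 - e) * cosCoeff e (n + 1) = 2 * n * cosCoeff e n - (n - 1 + e) * cosCoeff e (n - 1) := by
  linear_combination -natCast_mul_cosCoeff_sub_one he n + n * cosCoeff_sub_one he n

theorem cosCoeff_sub_one_zero {e : ℝ} (he : e < 1 / 2) :
    (1 - e) * cosCoeff (e - 1) 0 = 2 * (1 - 2 * e) * cosCoeff e 0 := by
  have h1e : 1 - e ≠ 0 := by linarith
  rw [cosCoeff_zero he, cosCoeff_zero (by linarith),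
    show 1 - 2 * (e - 1) = (1 - 2 * e) + 1 + 1 by ring, show 1 - (e - 1) = (1 - e) + 1 by ring,
    Gamma_add_one (by linarith), Gamma_add_one (by linarith), Gamma_add_one h1e]
  have hG : Gamma (1 - e) ≠ 0 := (Gamma_pos_of_pos (by linarith)).ne'
  field_simp
  ring

theorem cosCoeff_succ {e : ℝ} (he : e < 1 / 2) (n : ℕ) :
    (n + 1 - e) * cosCoeff e (n + 1) = (n + e) * cosCoeff e n := by
  induction n with
  | zero =>
    have h := cosCoeff_sub_one he 0
    rw [zero_sub, cosCoeff_neg, zero_add] at h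
    simp only [Nat.cast_zero, zero_add]
    linear_combination -cosCoeff_sub_one_zero he / 2 + (1 - e) / 2 * h
  | succ n ih =>
    push_cast at ih ⊢
    have h := cosCoeff_three_term he (n + 1)
    push_cast at h
    rw [add_sub_cancel_right] at h
    linear_combination h + ih

theorem Gamma_mul_cosCoeff {e : ℝ} (he : e < 1 / 2) (he' : ∀ m : ℕ, e ≠ -m) (n : ℕ) :
    Gamma e * Gamma (1 + n - e) * cosCoeff e n = Gamma (1 - e) * Gamma (n + e) * cosCoeff e 0 := by
  induction n with
  | zero => simp only [Nat.cast_zero, add_zero, zero_add]; ring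
  | succ n ih =>
    have hne : (n : ℝ) + e ≠ 0 := fun h => he' n (by linarith)
    have hpos : (1 + n - e : ℝ) ≠ 0 := by linarith [n.cast_nonneg (α := ℝ)]
    push_cast
    rw [show 1 + (n + 1) - e = (1 + n - e) + 1 by ring, Gamma_add_one hpos,
      show (n : ℝ) + 1 + e = (n + e) + 1 by ring, Gamma_add_one hne]
    linear_combination Gamma e * Gamma (1 + n - e) * cosCoeff_succ he n + (n + e) * ih

theorem cosCoeff_natCast {e : ℝ} (he : e < 1 / 2) (he' : ∀ m : ℕ, e ≠ -m) (n : ℕ) :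
    cosCoeff e n
      = π * Gamma (1 - 2 * e) * Gamma (n + e) / (Gamma (1 - e) * Gamma e * Gamma (1 + n - e)) := by
  have hG : Gamma (1 - e) ≠ 0 := (Gamma_pos_of_pos (by linarith)).ne'
  have hGn : Gamma (1 + n - e) ≠ 0 := (Gamma_pos_of_pos (by linarith [n.cast_nonneg (α := ℝ)])).ne'
  have h := Gamma_mul_cosCoeff he he' n
  rw [cosCoeff_zero he] at h
  rw [eq_div_iff (by simp [hG, hGn, Gamma_ne_zero he'])]
  generalize Gamma (1 - 2 * e) = c at h ⊢
  field_simp at h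
  linear_combination h

theorem integral_neg_eq_two_nsmul_of_even {E : Type*} [NormedAddCommGroup E] [NormedSpace ℝ E]
    {f : ℝ → E} {a : ℝ} (hf : ∀ x, f (-x) = f x) (hi : IntervalIntegrable f volume 0 a) :
    ∫ x in (-a)..a, f x = 2 • ∫ x in 0..a, f x := by
  have hi' : IntervalIntegrable f volume (-a) 0 := by
    simpa [hf] using ((IntervalIntegrable.iff_comp_neg).mp hi).symm
  have hneg : ∫ x in (-a)..0, f x = ∫ x in 0..a, f x := by
    simpa [hf] using (intervalIntegral.integral_comp_neg (a := 0) (b := a) f).symm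
  rw [← intervalIntegral.integral_add_adjacent_intervals hi' hi, hneg, two_nsmul]

end FractionalNoise

open FractionalNoise

/-- for `-1 < d < 1/2`, `d ≠ 0` and `h : ℕ`,
`(1/2π) ∫_{-π}^{π} (2-2cos λ)^(-d) cos(hλ) dλ = Γ(1-2d)Γ(h+d)/(Γ(1-d)Γ(d)Γ(1+h-d))`;
consequently the ARFIMA(0,d,0) autocovariance `γ₀(h)` (with innovation variance `σ² > 0`)
equals `σ²Γ(1-2d)Γ(h+d)/(Γ(1-d)Γ(d)Γ(1+h-d))` and the autocorrelation `γ₀(h)/γ₀(0)`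
equals `Γ(1-d)Γ(h+d)/(Γ(d)Γ(1+h-d))`. -/
theorem fractional_noise_autocovariance (d σ : ℝ) (hd1 : -1 < d) (hd2 : d < 1/2)
    (hd0 : d ≠ 0) (hσ : 0 < σ) (h : ℕ) :
    (1 / (2 * π)) * (∫ x in (-π)..π, (2 - 2 * Real.cos x) ^ (-d) * Real.cos ((h : ℝ) * x)) =
      Real.Gamma (1 - 2 * d) * Real.Gamma ((h : ℝ) + d) /
        (Real.Gamma (1 - d) * Real.Gamma d * Real.Gamma (1 + (h : ℝ) - d)) ∧
    σ ^ 2 * ((1 / (2 * π)) *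
        (∫ x in (-π)..π, (2 - 2 * Real.cos x) ^ (-d) * Real.cos ((h : ℝ) * x))) =
      σ ^ 2 * Real.Gamma (1 - 2 * d) * Real.Gamma ((h : ℝ) + d) /
        (Real.Gamma (1 - d) * Real.Gamma d * Real.Gamma (1 + (h : ℝ) - d)) ∧
    (σ ^ 2 * ((1 / (2 * π)) *
        (∫ x in (-π)..π, (2 - 2 * Real.cos x) ^ (-d) * Real.cos ((h : ℝ) * x)))) /
      (σ ^ 2 * ((1 / (2 * π)) *
        (∫ x in (-π)..π, (2 - 2 * Real.cos x) ^ (-d) * Real.cos ((0 : ℝ) * x)))) =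
      Real.Gamma (1 - d) * Real.Gamma ((h : ℝ) + d) /
        (Real.Gamma d * Real.Gamma (1 + (h : ℝ) - d)) := by
  have hd : ∀ m : ℕ, d ≠ -m := by
    rintro (_ | m) rfl
    · exact hd0 (by simp)
    · push_cast at hd1
      linarith [m.cast_nonneg (α := ℝ)]
  have hcov (n : ℕ) : (1 / (2 * π)) * (∫ x in (-π)..π, (2 - 2 * cos x) ^ (-d) * cos (n * x)) =
      Gamma (1 - 2 * d) * Gamma (n + d) / (Gamma (1 - d) * Gamma d * Gamma (1 + n - d)) := by
    rw [integral_neg_eq_two_nsmul_of_even (fun x => by simp only [cos_neg, mul_neg])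
      (intervalIntegrable_two_sub_two_cos_rpow_mul_cos hd2 n), nsmul_eq_mul, Nat.cast_ofNat,
      ← cosCoeff, cosCoeff_natCast hd2 hd n]
    field_simp
  have hcov₀ := hcov 0
  simp only [Nat.cast_zero, zero_add, add_zero] at hcov₀
  refine ⟨hcov h, by rw [hcov h]; ring, ?_⟩
  have hΓ : Gamma d ≠ 0 := Gamma_ne_zero hd
  have hΓ₁ : Gamma (1 - d) ≠ 0 := (Gamma_pos_of_pos (by linarith)).ne'
  have hΓ₂ : Gamma (1 - 2 * d) ≠ 0 := (Gamma_pos_of_pos (by linarith)).ne'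
  rw [hcov h, hcov₀]
  field_simp
end

section
/- Let d be real with -1 < d < 1/2 and d ≠ 0, let σ > 0, and let γ₀(h) = σ² Γ(1-2d) Γ(h+d) / (Γ(1-d) Γ(d) Γ(1+h-d)) be the ARFIMA(0,d,0) autocovariance. Then γ₀(h) ∼ c_γ h^(2d-1) as h → ∞ with c_γ = σ² π^{-1} Γ(1 - 2d) sin(π d); precisely, the sequence h ↦ γ₀(h) · h^(1-2d) tends to σ² Γ(1-2d) sin(π d) / π as h → ∞. -/
open Real Filter

lemma gamma_prod_aux (s : ℝ) (hs : ∀ k : ℕ, s + (k : ℝ) ≠ 0) (n : ℕ) :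
    Real.Gamma s * ∏ j ∈ Finset.range n, (s + (j : ℝ)) = Real.Gamma (s + n) := by
  induction n with
  | zero => simp
  | succ n ih =>
    rw [Finset.prod_range_succ, ← mul_assoc, ih,
      show s + ((n : ℕ) + 1 : ℕ) = (s + n) + 1 by push_cast; ring,
      Real.Gamma_add_one (hs n)]
    ring

/-- the ARFIMA(0,d,0) autocovariance
`γ₀(h) = σ²Γ(1-2d)Γ(h+d)/(Γ(1-d)Γ(d)Γ(1+h-d))` satisfies `γ₀(h) ∼ c_γ h^(2d-1)` with
`c_γ = σ²π⁻¹Γ(1-2d)sin(πd)`; precisely `γ₀(h) · h^(1-2d) → σ²Γ(1-2d)sin(πd)/π`. -/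
theorem fractional_noise_acvf_hyperbolic_decay (d σ : ℝ) (hd1 : -1 < d) (hd2 : d < 1/2)
    (hd0 : d ≠ 0) (hσ : 0 < σ) :
    Tendsto (fun h : ℕ =>
        (σ ^ 2 * Real.Gamma (1 - 2 * d) * Real.Gamma ((h : ℝ) + d) /
          (Real.Gamma (1 - d) * Real.Gamma d * Real.Gamma (1 + (h : ℝ) - d))) *
          (h : ℝ) ^ (1 - 2 * d))
      atTop (nhds (σ ^ 2 * Real.Gamma (1 - 2 * d) * Real.sin (π * d) / π)) := by
  have hd_ne : ∀ k : ℕ, d + (k : ℝ) ≠ 0 := by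
    intro k
    rcases Nat.eq_zero_or_pos k with rfl | hk
    · simpa using hd0
    · have : (1 : ℝ) ≤ (k : ℝ) := by exact_mod_cast hk
      nlinarith
  have hd1_ne : ∀ k : ℕ, (1 - d) + (k : ℝ) ≠ 0 := by
    intro k
    have : (0 : ℝ) ≤ (k : ℝ) := Nat.cast_nonneg k
    nlinarith
  have hΓd : Real.Gamma d ≠ 0 := by
    refine Real.Gamma_ne_zero fun m => ?_
    rcases Nat.eq_zero_or_pos m with rfl | hm
    · simpa using hd0
    · have : (1 : ℝ) ≤ (m : ℝ) := by exact_mod_cast hm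
      intro h; rw [h] at hd1; linarith
  have hΓ1d : Real.Gamma (1 - d) ≠ 0 := (Real.Gamma_pos_of_pos (by linarith)).ne'
  have hsin : Real.sin (π * d) ≠ 0 := by
    rcases lt_or_gt_of_ne hd0 with h | h
    · have hpos : 0 < Real.sin (π * (-d)) :=
        Real.sin_pos_of_pos_of_lt_pi (by nlinarith [Real.pi_pos])
          (by nlinarith [Real.pi_pos])
      have h2 : Real.sin (π * d) = -Real.sin (π * (-d)) := by
        rw [show π * d = -(π * (-d)) by ring, Real.sin_neg]
      rw [h2]; exact neg_ne_zero.mpr hpos.ne'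
    · exact (Real.sin_pos_of_pos_of_lt_pi (by positivity)
        (by nlinarith [Real.pi_pos])).ne'
  set C : ℝ := σ ^ 2 * Real.Gamma (1 - 2 * d) / (Real.Gamma (1 - d) * Real.Gamma d) with hC
  have key : Tendsto (fun n : ℕ => Real.GammaSeq (1 - d) n / Real.GammaSeq d n) atTop
      (nhds (Real.Gamma (1 - d) / Real.Gamma d)) :=
    (Real.GammaSeq_tendsto_Gamma (1 - d)).div (Real.GammaSeq_tendsto_Gamma d) hΓd
  have h2 : Tendsto (fun n : ℕ => ((n : ℝ) + (1 - d)) / (n : ℝ)) atTop (nhds 1) := by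
    have := (tendsto_natCast_div_add_atTop (𝕜 := ℝ) (1 - d)).inv₀ one_ne_zero
    simpa [inv_div] using this
  have h3 : Tendsto (fun n : ℕ => (n : ℝ) / ((n : ℝ) + d)) atTop (nhds 1) :=
    tendsto_natCast_div_add_atTop d
  have main : Tendsto (fun n : ℕ =>
      Real.GammaSeq (1 - d) n / Real.GammaSeq d n * (Real.Gamma d / Real.Gamma (1 - d)) *
        (((n : ℝ) + (1 - d)) / (n : ℝ) * ((n : ℝ) / ((n : ℝ) + d))) * C)
      atTop (nhds C) := by
    have := ((key.mul (tendsto_const_nhds (x := Real.Gamma d / Real.Gamma (1 - d)))).mul (h2.mul h3)).mul_const C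
    have heq : Real.Gamma (1 - d) / Real.Gamma d * (Real.Gamma d / Real.Gamma (1 - d)) *
        (1 * 1) * C = C := by field_simp
    rwa [heq] at this
  have congreq : (fun h : ℕ =>
        (σ ^ 2 * Real.Gamma (1 - 2 * d) * Real.Gamma ((h : ℝ) + d) /
          (Real.Gamma (1 - d) * Real.Gamma d * Real.Gamma (1 + (h : ℝ) - d))) *
          (h : ℝ) ^ (1 - 2 * d)) =ᶠ[atTop] (fun n : ℕ =>
      Real.GammaSeq (1 - d) n / Real.GammaSeq d n * (Real.Gamma d / Real.Gamma (1 - d)) *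
        (((n : ℝ) + (1 - d)) / (n : ℝ) * ((n : ℝ) / ((n : ℝ) + d))) * C) := by
    filter_upwards [eventually_ge_atTop 1] with n hn
    have hx : (0 : ℝ) < (n : ℝ) := by exact_mod_cast hn
    have hx1 : (1 : ℝ) ≤ (n : ℝ) := by exact_mod_cast hn
    have hxd : (0 : ℝ) < (n : ℝ) + d := by linarith
    have hx1d : (0 : ℝ) < 1 + (n : ℝ) - d := by linarith
    have hΓnd : (0 : ℝ) < Real.Gamma ((n : ℝ) + d) := Real.Gamma_pos_of_pos (by linarith)
    have hΓn1d : (0 : ℝ) < Real.Gamma (1 + (n : ℝ) - d) := Real.Gamma_pos_of_pos hx1d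
    have hp1 : Real.Gamma d * ∏ j ∈ Finset.range (n + 1), (d + (j : ℝ)) =
        ((n : ℝ) + d) * Real.Gamma ((n : ℝ) + d) := by
      rw [gamma_prod_aux d hd_ne (n + 1),
        show d + ((n + 1 : ℕ) : ℝ) = ((n : ℝ) + d) + 1 by push_cast; ring,
        Real.Gamma_add_one hxd.ne']
    have hp2 : Real.Gamma (1 - d) * ∏ j ∈ Finset.range (n + 1), ((1 - d) + (j : ℝ)) =
        (1 + (n : ℝ) - d) * Real.Gamma (1 + (n : ℝ) - d) := by
      rw [gamma_prod_aux (1 - d) hd1_ne (n + 1),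
        show (1 - d) + ((n + 1 : ℕ) : ℝ) = (1 + (n : ℝ) - d) + 1 by push_cast; ring,
        Real.Gamma_add_one hx1d.ne']
    have hq1 : ∏ j ∈ Finset.range (n + 1), (d + (j : ℝ)) =
        ((n : ℝ) + d) * Real.Gamma ((n : ℝ) + d) / Real.Gamma d := by
      field_simp [hΓd] at hp1 ⊢; linarith [hp1]
    have hq2 : ∏ j ∈ Finset.range (n + 1), ((1 - d) + (j : ℝ)) =
        (1 + (n : ℝ) - d) * Real.Gamma (1 + (n : ℝ) - d) / Real.Gamma (1 - d) := by
      field_simp [hΓ1d] at hp2 ⊢; linarith [hp2]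
    have hrpow : (n : ℝ) ^ (1 - d) = (n : ℝ) ^ (1 - 2 * d) * (n : ℝ) ^ d := by
      rw [← Real.rpow_add hx]; ring_nf
    have hfact : (0 : ℝ) < (Nat.factorial n : ℝ) := by positivity
    have hrp : (0 : ℝ) < (n : ℝ) ^ (1 - 2 * d) := Real.rpow_pos_of_pos hx _
    have hrpd : (0 : ℝ) < (n : ℝ) ^ d := Real.rpow_pos_of_pos hx _
    simp only [Real.GammaSeq, hq1, hq2, hrpow, hC]
    field_simp
    ring
  have hCeq : C = σ ^ 2 * Real.Gamma (1 - 2 * d) * Real.sin (π * d) / π := by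
    rw [hC, mul_comm (Real.Gamma (1 - d)), Real.Gamma_mul_Gamma_one_sub d,
      div_div_eq_mul_div]
  exact hCeq ▸ main.congr' congreq.symm
end

section
/- Let d be real with 0 < d < 1/2, let c be real, and let γ : ℕ → ℝ be a sequence such that γ(h) · h^(1-2d) → c as h → ∞. Then n^(1-2d) · (1/n) [ 2 ∑_{j=1}^{n-1} (1 - j/n) γ(j) + γ(0) ] → c / ( d (2d + 1) ) as n → ∞. (Hence for a stationary long-memory process with γ(h) ∼ c_γ h^(2d-1), the variance of the sample mean satisfies Var(ȳ) ∼ n^(2d-1) c_γ / (d(2d+1)).) -/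
/-!
Let `S k = γ 0 + ⋯ + γ (k - 1)`. Exchanging the order of summation,
`∑_{k ≤ n} S k = n γ 0 + ∑_{j=1}^{n-1} (n - j) γ j`, so the normalised variance equals
`2 n^(-2d-1) ∑_{k ≤ n} S k - γ 0 n^(-2d)`. A Stolz–Cesàro type lemma — if `u j * j^(1-a) → L`
with `a > 0` then `n^(-a) ∑_{j<n} u j → L / a` — applied with `a = 2d` to `γ` and then with
`a = 2d + 1` to `S` gives the limit `2c / (2d (2d + 1))`.

The lemma itself follows by comparing `u j` with the increments `(j + 1)^a - j^a`, which telescope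
to `n^a` and are asymptotic to `a j^(a-1)` (the derivative of `x ↦ x^a` at `1`), and summing the
resulting little-o relation.
-/

open Real Filter Finset Topology Asymptotics

theorem tendsto_rpow_succ_sub_rpow_mul_rpow (a : ℝ) :
    Tendsto (fun j : ℕ => (((j : ℝ) + 1) ^ a - (j : ℝ) ^ a) * (j : ℝ) ^ (1 - a)) atTop (𝓝 a) := by
  have hslope : Tendsto (fun t : ℝ => t⁻¹ * ((1 + t) ^ a - 1 ^ a)) (𝓝[>] 0) (𝓝 a) := by
    simpa using
      (hasDerivAt_rpow_const (x := 1) (p := a) (Or.inl one_ne_zero)).tendsto_slope_zero_right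
  refine (hslope.comp (tendsto_inv_atTop_nhdsGT_zero.comp tendsto_natCast_atTop_atTop)).congr' ?_
  filter_upwards [eventually_ge_atTop 1] with j hj
  have hj0 : (0 : ℝ) < j := by exact_mod_cast hj
  have hsucc : (1 : ℝ) + (j : ℝ)⁻¹ = ((j : ℝ) + 1) / j := by field_simp
  simp only [Function.comp_apply, inv_inv, one_rpow, hsucc, rpow_sub hj0, rpow_one]
  rw [div_rpow (by positivity) hj0.le]
  have : (0 : ℝ) < (j : ℝ) ^ a := by positivity
  field_simp

theorem tendsto_sum_range_div_rpow_of_tendsto_mul_rpow {a L : ℝ} (ha : 0 < a) {u : ℕ → ℝ}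
    (hu : Tendsto (fun j : ℕ => u j * (j : ℝ) ^ (1 - a)) atTop (𝓝 L)) :
    Tendsto (fun n : ℕ => (∑ j ∈ range n, u j) / (n : ℝ) ^ a) atTop (𝓝 (L / a)) := by
  set D : ℕ → ℝ := fun j => ((j : ℝ) + 1) ^ a - (j : ℝ) ^ a
  have hD_pos (j : ℕ) : 0 < D j := sub_pos.2 (rpow_lt_rpow (by positivity) (by linarith) ha)
  have hD_sum (n : ℕ) : ∑ j ∈ range n, D j = (n : ℝ) ^ a := by
    simpa [D, zero_rpow ha.ne'] using sum_range_sub (fun j : ℕ => (j : ℝ) ^ a) n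
  have hratio : Tendsto (fun j => u j / D j) atTop (𝓝 (L / a)) := by
    refine (hu.div (tendsto_rpow_succ_sub_rpow_mul_rpow a) ha.ne').congr' ?_
    filter_upwards [eventually_ge_atTop 1] with j hj
    have : (0 : ℝ) < (j : ℝ) ^ (1 - a) := by positivity
    exact mul_div_mul_right _ _ this.ne'
  have hsmall : (fun j => u j - L / a * D j) =o[atTop] D := by
    rw [isLittleO_iff_tendsto' (.of_forall fun j h => absurd h (hD_pos j).ne')]
    refine (tendsto_sub_nhds_zero_iff.2 hratio).congr fun j => ?_
    field_simp [(hD_pos j).ne']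
  have hsum := hsmall.sum_range (fun j => (hD_pos j).le)
    (by simpa only [hD_sum, Function.comp_def] using
      (tendsto_rpow_atTop ha).comp tendsto_natCast_atTop_atTop)
  simp only [hD_sum, sum_sub_distrib, ← mul_sum] at hsum
  have := hsum.tendsto_div_nhds_zero.add_const (L / a)
  rw [zero_add] at this
  refine this.congr' ?_
  filter_upwards [eventually_ge_atTop 1] with n hn
  have : (0 : ℝ) < (n : ℝ) ^ a := by positivity
  field_simp
  ring

theorem sum_range_succ_sum_range {R : Type*} [CommRing R] (γ : ℕ → R) (n : ℕ) :
    ∑ k ∈ range (n + 1), ∑ j ∈ range k, γ j = ∑ j ∈ range n, ((n : R) - j) * γ j := by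
  induction n with
  | zero => simp
  | succ n ih =>
    rw [sum_range_succ, ih]
    push_cast
    simp only [sub_mul, add_mul, one_mul, sum_sub_distrib, sum_add_distrib, sum_range_succ]
    ring

theorem sum_range_succ_sum_range_eq_add_sum_Icc {R : Type*} [CommRing R] (γ : ℕ → R) (n : ℕ) :
    ∑ k ∈ range (n + 1), ∑ j ∈ range k, γ j =
      n * γ 0 + ∑ j ∈ Icc 1 (n - 1), ((n : R) - j) * γ j := by
  rw [sum_range_succ_sum_range]
  cases n with
  | zero => simp
  | succ m =>
    rw [sum_range_succ', ← Ico_add_one_right_eq_Icc, sum_Ico_eq_sum_range]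
    simp [add_comm]

theorem rpow_mul_sample_mean_variance_eq (γ : ℕ → ℝ) (p : ℝ) {n : ℕ} (hn : n ≠ 0) :
    (n : ℝ) ^ (1 - p) * ((1 / (n : ℝ)) * (2 * ∑ j ∈ Icc 1 (n - 1), (1 - (j : ℝ) / n) * γ j + γ 0))
      = 2 * ((∑ k ∈ range (n + 1), ∑ j ∈ range k, γ j) / (n : ℝ) ^ (p + 1))
        - γ 0 / (n : ℝ) ^ p := by
  have hn0 : (0 : ℝ) < n := by positivity
  have hweights : ∑ j ∈ Icc 1 (n - 1), (1 - (j : ℝ) / n) * γ j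
      = (∑ k ∈ range (n + 1), ∑ j ∈ range k, γ j - n * γ 0) / n := by
    rw [sum_range_succ_sum_range_eq_add_sum_Icc, add_sub_cancel_left, sum_div]
    refine sum_congr rfl fun j _ => ?_
    field_simp
  rw [hweights, rpow_add hn0, rpow_one, rpow_sub hn0, rpow_one]
  have : (0 : ℝ) < (n : ℝ) ^ p := by positivity
  field_simp
  ring

theorem sample_mean_variance_asymptotics_general (d c : ℝ) (hd1 : 0 < d)
    (γ : ℕ → ℝ)
    (hγ : Tendsto (fun h : ℕ => γ h * (h : ℝ) ^ (1 - 2 * d)) atTop (nhds c)) :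
    Tendsto (fun n : ℕ =>
        (n : ℝ) ^ (1 - 2 * d) *
          ((1 / (n : ℝ)) *
            (2 * ∑ j ∈ Finset.Icc 1 (n - 1), (1 - (j : ℝ) / (n : ℝ)) * γ j + γ 0)))
      atTop (nhds (c / (d * (2 * d + 1)))) := by
  set S : ℕ → ℝ := fun k => ∑ j ∈ range k, γ j
  have hS : Tendsto (fun k : ℕ => S k / (k : ℝ) ^ (2 * d)) atTop (𝓝 (c / (2 * d))) :=
    tendsto_sum_range_div_rpow_of_tendsto_mul_rpow (by positivity) hγ
  have hSS : Tendsto (fun n : ℕ => (∑ k ∈ range n, S k) / (n : ℝ) ^ (2 * d + 1)) atTop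
      (𝓝 (c / (2 * d) / (2 * d + 1))) := by
    refine tendsto_sum_range_div_rpow_of_tendsto_mul_rpow (by positivity) (hS.congr fun k => ?_)
    rw [show 1 - (2 * d + 1) = -(2 * d) by ring, rpow_neg k.cast_nonneg, div_eq_mul_inv]
  have hS_last : Tendsto (fun n : ℕ => S n / (n : ℝ) ^ (2 * d + 1)) atTop (𝓝 0) := by
    have := hS.mul (tendsto_inv_atTop_zero.comp tendsto_natCast_atTop_atTop)
    rw [mul_zero] at this
    refine this.congr' ?_
    filter_upwards [eventually_ne_atTop 0] with n hn
    rw [Function.comp_apply, rpow_add_one (Nat.cast_ne_zero.2 hn), ← div_div,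
      div_eq_mul_inv _ (n : ℝ)]
  have hγ0 : Tendsto (fun n : ℕ => γ 0 / (n : ℝ) ^ (2 * d)) atTop (𝓝 0) :=
    tendsto_const_nhds.div_atTop
      ((tendsto_rpow_atTop (by positivity)).comp tendsto_natCast_atTop_atTop)
  have hlim := ((hSS.add hS_last).const_mul 2).sub hγ0
  rw [show 2 * (c / (2 * d) / (2 * d + 1) + 0) - 0 = c / (d * (2 * d + 1)) by
    field_simp; ring] at hlim
  refine hlim.congr' ?_
  filter_upwards [eventually_ne_atTop 0] with n hn
  rw [rpow_mul_sample_mean_variance_eq γ (2 * d) hn, sum_range_succ, add_div]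

/-- if `γ(h)·h^(1-2d) → c` with `0 < d < 1/2`, then the exact variance of
the sample mean, `(1/n)[2∑_{j=1}^{n-1}(1 - j/n)γ(j) + γ(0)]`, multiplied by `n^(1-2d)`,
converges to `c/(d(2d+1))`. -/
theorem sample_mean_variance_asymptotics (d c : ℝ) (hd1 : 0 < d) (hd2 : d < 1/2)
    (γ : ℕ → ℝ)
    (hγ : Tendsto (fun h : ℕ => γ h * (h : ℝ) ^ (1 - 2 * d)) atTop (nhds c)) :
    Tendsto (fun n : ℕ =>
        (n : ℝ) ^ (1 - 2 * d) *
          ((1 / (n : ℝ)) *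
            (2 * ∑ j ∈ Finset.Icc 1 (n - 1), (1 - (j : ℝ) / (n : ℝ)) * γ j + γ 0)))
      atTop (nhds (c / (d * (2 * d + 1)))) :=
  sample_mean_variance_asymptotics_general d c hd1 γ hγ
end

section
/- Let d be real with 0 < d < 1/2 and let η_j = Γ(j + d) / (Γ(j + 1) Γ(d)) be the fractional differencing coefficients. Let ψ : ℕ → ℝ satisfy ∑_{j=0}^∞ |ψ_j| (j + 1)^(1-d) < ∞ (in particular ψ is absolutely summable and ψ_j / j^(d-1) → 0). Define the impulse response coefficients R_j = ∑_{i=0}^{j} ψ_i η_{j-i}. Then R_j · Γ(d) · j^(1-d) → ∑_{i=0}^∞ ψ_i as j → ∞; that is, R_j ∼ (j^(d-1) / Γ(d)) ∑_{i=0}^∞ ψ_i. -/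
/-!
By Gautschi's inequality (a consequence of the log-convexity of `Γ`), the ratio
`Γ (k + d) / Γ (k + 1)` is squeezed between `(k + d) ^ (d - 1)` and `k ^ (d - 1)`, so
`η_{j-i} Γ(d) j ^ (1 - d) → 1` for each fixed `i`, while `η_k (k + 1) ^ (1 - d)` stays bounded.
Since `j ≤ (j - i + 1)(i + 1)`, the terms `ψ_i η_{j-i} Γ(d) j ^ (1 - d)` are dominated by a
constant times `|ψ_i| (i + 1) ^ (1 - d)`, and Tannery's theorem gives the limit `∑ ψ_i`.
-/

open Real Filter Finset

open scoped Topology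

namespace Real

lemma Gamma_rpow_mul_Gamma_add_one_rpow {y a b : ℝ} (hy : 0 < y) (hab : a + b = 1) :
    Gamma y ^ a * Gamma (y + 1) ^ b = Gamma y * y ^ b := by
  have hG := Gamma_pos_of_pos hy
  rw [Gamma_add_one hy.ne', mul_rpow hy.le hG.le, mul_left_comm, ← rpow_add hG, hab, rpow_one,
    mul_comm]

/- The two halves of Gautschi's inequality: log-convexity of `Γ` on `[x + s, x + s + 1]`,
resp. on `[x, x + 1]`, combined with `Γ (y + 1) = y Γ y`. -/
theorem Gamma_add_one_le_Gamma_add_mul_rpow {x s : ℝ} (hxs : 0 < x + s) (hs0 : 0 < s)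
    (hs1 : s < 1) : Gamma (x + 1) ≤ Gamma (x + s) * (x + s) ^ (1 - s) := by
  have h := Gamma_mul_add_mul_le_rpow_Gamma_mul_rpow_Gamma hxs (by linarith : 0 < x + s + 1) hs0
    (sub_pos.2 hs1) (add_sub_cancel s 1)
  rwa [show s * (x + s) + (1 - s) * (x + s + 1) = x + 1 by ring,
    Gamma_rpow_mul_Gamma_add_one_rpow hxs (add_sub_cancel s 1)] at h

theorem Gamma_add_mul_rpow_le_Gamma_add_one {x s : ℝ} (hx : 0 < x) (hs0 : 0 < s) (hs1 : s < 1) :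
    Gamma (x + s) * x ^ (1 - s) ≤ Gamma (x + 1) := by
  have h := Gamma_mul_add_mul_le_rpow_Gamma_mul_rpow_Gamma hx (by linarith : 0 < x + 1)
    (sub_pos.2 hs1) hs0 (sub_add_cancel 1 s)
  rw [show (1 - s) * x + s * (x + 1) = x + s by ring,
    Gamma_rpow_mul_Gamma_add_one_rpow hx (sub_add_cancel 1 s)] at h
  calc Gamma (x + s) * x ^ (1 - s) ≤ Gamma x * x ^ s * x ^ (1 - s) := by gcongr
    _ = Gamma (x + 1) := by
      rw [mul_assoc, ← rpow_add hx, add_sub_cancel, rpow_one, Gamma_add_one hx.ne', mul_comm]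

end Real

/-- `η_k = gammaRatio d k / Γ d`. -/
noncomputable def gammaRatio (s x : ℝ) : ℝ := Gamma (x + s) / Gamma (x + 1)

lemma gammaRatio_pos {s x : ℝ} (hxs : 0 < x + s) (hx : 0 < x + 1) : 0 < gammaRatio s x :=
  div_pos (Gamma_pos_of_pos hxs) (Gamma_pos_of_pos hx)

lemma tendsto_add_div_add_atTop (c c' : ℝ) :
    Tendsto (fun x : ℝ => (x + c) / (x + c')) atTop (𝓝 1) := by
  have h : ∀ a : ℝ, Tendsto (fun x : ℝ => 1 + a / x) atTop (𝓝 1) := fun a => by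
    simpa using tendsto_const_nhds.add ((tendsto_const_nhds (x := a)).div_atTop tendsto_id)
  have hdiv := (h c).div (h c') one_ne_zero
  rw [div_one] at hdiv
  refine hdiv.congr' ?_
  filter_upwards [eventually_gt_atTop 0] with x hx
  change (1 + c / x) / (1 + c' / x) = _
  field_simp

theorem tendsto_gammaRatio_mul_rpow {s : ℝ} (hs0 : 0 < s) (hs1 : s < 1) (c : ℝ) :
    Tendsto (fun x => gammaRatio s x * (x + c) ^ (1 - s)) atTop (𝓝 1) := by
  have hlim (c' : ℝ) : Tendsto (fun x => ((x + c) / (x + c')) ^ (1 - s)) atTop (𝓝 1) := by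
    simpa using (tendsto_add_div_add_atTop c c').rpow_const (.inl one_ne_zero)
  have hlarge := (eventually_gt_atTop 0).and (eventually_ge_atTop (-c))
  refine tendsto_of_tendsto_of_tendsto_of_le_of_le' (hlim s) (hlim 0) ?_ ?_
  · filter_upwards [hlarge] with x ⟨hx, hxc⟩
    have hGs := Gamma_pos_of_pos (by linarith : 0 < x + s)
    have hGauts := Gamma_add_one_le_Gamma_add_mul_rpow (by linarith : 0 < x + s) hs0 hs1
    rw [gammaRatio, div_rpow (by linarith) (by linarith), div_mul_eq_mul_div,
      div_le_div_iff₀ (by positivity) (Gamma_pos_of_pos (by linarith))]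
    calc (x + c) ^ (1 - s) * Gamma (x + 1)
        ≤ (x + c) ^ (1 - s) * (Gamma (x + s) * (x + s) ^ (1 - s)) :=
          mul_le_mul_of_nonneg_left hGauts (rpow_nonneg (by linarith) _)
      _ = _ := by ring
  · filter_upwards [hlarge] with x ⟨hx, hxc⟩
    have hGauts := Gamma_add_mul_rpow_le_Gamma_add_one hx hs0 hs1
    rw [gammaRatio, add_zero, div_rpow (by linarith) hx.le, div_mul_eq_mul_div,
      div_le_div_iff₀ (Gamma_pos_of_pos (by linarith)) (by positivity)]
    calc Gamma (x + s) * (x + c) ^ (1 - s) * x ^ (1 - s)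
        = (x + c) ^ (1 - s) * (Gamma (x + s) * x ^ (1 - s)) := by ring
      _ ≤ _ := mul_le_mul_of_nonneg_left hGauts (rpow_nonneg (by linarith) _)

lemma add_rpow_le_add_one_rpow_mul_add_one_rpow {m n p : ℝ} (hm : 0 ≤ m) (hn : 0 ≤ n)
    (hp : 0 ≤ p) : (m + n) ^ p ≤ (m + 1) ^ p * (n + 1) ^ p := by
  rw [← mul_rpow (by linarith) (by linarith)]
  exact rpow_le_rpow (by linarith) (by nlinarith) hp

lemma tendsto_gammaRatio_sub_mul_rpow {s : ℝ} (hs0 : 0 < s) (hs1 : s < 1) (i : ℕ) :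
    Tendsto (fun j : ℕ => gammaRatio s ↑(j - i) * (j : ℝ) ^ (1 - s)) atTop (𝓝 1) := by
  refine ((tendsto_gammaRatio_mul_rpow hs0 hs1 i).comp
    (tendsto_atTop_add_const_right _ (-(i : ℝ)) tendsto_natCast_atTop_atTop)).congr' ?_
  filter_upwards [eventually_ge_atTop i] with j hij
  simp [Nat.cast_sub hij, sub_eq_add_neg]

lemma abs_gammaRatio_sub_mul_rpow_le {s C : ℝ} (hs0 : 0 < s) (hs1 : s ≤ 1)
    (hC : ∀ k : ℕ, gammaRatio s k * ((k : ℝ) + 1) ^ (1 - s) ≤ C) {i j : ℕ}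
    (hij : i ≤ j) :
    |gammaRatio s ↑(j - i) * (j : ℝ) ^ (1 - s)| ≤ C * ((i : ℝ) + 1) ^ (1 - s) := by
  have hη : 0 ≤ gammaRatio s ↑(j - i) := (gammaRatio_pos (by positivity) (by positivity)).le
  have hj : (j : ℝ) = ↑(j - i) + i := by rw [Nat.cast_sub hij, sub_add_cancel]
  rw [abs_of_nonneg (by positivity), hj]
  calc gammaRatio s ↑(j - i) * (↑(j - i) + ↑i) ^ (1 - s)
      ≤ gammaRatio s ↑(j - i) * ((↑(j - i) + 1) ^ (1 - s) * ((i : ℝ) + 1) ^ (1 - s)) := by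
        gcongr
        exact add_rpow_le_add_one_rpow_mul_add_one_rpow (by positivity) (by positivity)
          (by linarith)
    _ ≤ C * ((i : ℝ) + 1) ^ (1 - s) := by
        rw [← mul_assoc]
        exact mul_le_mul_of_nonneg_right (hC (j - i)) (by positivity)

theorem tendsto_sum_range_mul_of_dominated {ψ w : ℕ → ℝ} {c : ℕ → ℕ → ℝ}
    (hw : Summable fun i => |ψ i| * w i) (hc : ∀ i, Tendsto (c · i) atTop (𝓝 1))
    (hbound : ∀ i j, i ≤ j → |c j i| ≤ w i) :
    Tendsto (fun j => ∑ i ∈ range (j + 1), ψ i * c j i) atTop (𝓝 (∑' i, ψ i)) := by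
  set f : ℕ → ℕ → ℝ := fun j i => if i ≤ j then ψ i * c j i else 0
  have hf : ∀ j, ∑' i, f j i = ∑ i ∈ range (j + 1), ψ i * c j i := fun j => by
    rw [tsum_eq_sum (s := range (j + 1)) fun i hi => if_neg (by simpa [Nat.lt_succ_iff] using hi)]
    exact sum_congr rfl fun i hi => if_pos (Nat.lt_succ_iff.1 (mem_range.1 hi))
  refine (tendsto_tsum_of_dominated_convergence hw (fun i => ?_)
    (.of_forall fun j i => ?_)).congr hf
  · simpa using ((hc i).const_mul (ψ i)).congr' <|
      (eventually_ge_atTop i).mono fun j hj => (if_pos hj).symm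
  · by_cases hij : i ≤ j
    · simpa [f, hij, abs_mul] using mul_le_mul_of_nonneg_left (hbound i j hij) (abs_nonneg _)
    · simpa [f, hij] using mul_nonneg (abs_nonneg _) ((abs_nonneg _).trans (hbound i i le_rfl))

/-- for `0 < d < 1/2`, `η_j = Γ(j+d)/(Γ(j+1)Γ(d))`, and `ψ` with
`∑ |ψ_j|(j+1)^(1-d) < ∞`, the impulse response coefficients `R_j = ∑_{i=0}^j ψ_i η_{j-i}`
satisfy `R_j · Γ(d) · j^(1-d) → ∑_{i=0}^∞ ψ_i`, i.e. `R_j ∼ (j^(d-1)/Γ(d)) ∑ ψ_i`. -/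
theorem impulse_response_asymptotics (d : ℝ) (hd1 : 0 < d) (hd2 : d < 1/2) (ψ : ℕ → ℝ)
    (hψ : Summable (fun j : ℕ => |ψ j| * ((j : ℝ) + 1) ^ (1 - d))) :
    Tendsto (fun j : ℕ =>
        (∑ i ∈ Finset.range (j + 1),
            ψ i * (Real.Gamma (((j - i : ℕ) : ℝ) + d) /
              (Real.Gamma (((j - i : ℕ) : ℝ) + 1) * Real.Gamma d))) *
          Real.Gamma d * (j : ℝ) ^ (1 - d))
      atTop (nhds (∑' i, ψ i)) := by
  have hd : d < 1 := by linarith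
  obtain ⟨C, hC⟩ := ((tendsto_gammaRatio_mul_rpow hd1 hd 1).comp
    tendsto_natCast_atTop_atTop).bddAbove_range
  have hbound (i j : ℕ) (hij : i ≤ j) :=
    abs_gammaRatio_sub_mul_rpow_le hd1 hd.le (fun k => hC ⟨k, rfl⟩) hij
  have hsum : Summable fun i : ℕ => |ψ i| * (C * ((i : ℝ) + 1) ^ (1 - d)) := by
    simpa only [mul_left_comm] using hψ.mul_left C
  have hlim := tendsto_gammaRatio_sub_mul_rpow hd1 hd
  refine (tendsto_sum_range_mul_of_dominated hsum hlim hbound).congr fun j => ?_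
  rw [sum_mul, sum_mul]
  refine sum_congr rfl fun i _ => ?_
  rw [gammaRatio]
  field_simp [(Gamma_pos_of_pos hd1).ne']
end
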